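/- Let q ≥ 2 and n ≥ 4 be natural numbers. Then 2 · q^(n(n−1)) · (q^n − 1) · ∏_{i=1}^{n−1} (q^(2i) − 1) > q^(2n² − n). -/

import Mathlib

/-!
Factor `q^(2i) - 1 = q^(2i) (1 - q^(-2i))`. By the Weierstrass product inequality and a geometric
series, `∏ (1 - q^(-2i)) ≥ 1 - 1/(q² - 1) ≥ 2/3`, so the right-hand side is at least
`(4/3) (q^n - 1) q^(2n² - 2n)`, which exceeds `q^(2n² - n)` as soon as `q^n > 4`.
-/

open Finset

theorem Finset.one_sub_sum_le_prod_one_sub {ι R : Type*} [CommRing R] [LinearOrder R]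
    [IsStrictOrderedRing R] (s : Finset ι) {f : ι → R} (h0 : ∀ i ∈ s, 0 ≤ f i)
    (h1 : ∀ i ∈ s, f i ≤ 1) : 1 - ∑ i ∈ s, f i ≤ ∏ i ∈ s, (1 - f i) := by
  induction s using Finset.cons_induction with
  | empty => simp
  | cons a s _ ih =>
    simp only [mem_cons, forall_eq_or_imp] at h0 h1
    rw [sum_cons, prod_cons]
    have hrest := ih h0.2 h1.2
    have hsum : 0 ≤ ∑ i ∈ s, f i := sum_nonneg h0.2
    nlinarith [mul_le_mul_of_nonneg_left hrest (sub_nonneg.2 h1.1)]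

theorem Finset.sum_Icc_one_id_mul_two (m : ℕ) : (∑ i ∈ Icc 1 m, i) * 2 = m * (m + 1) := by
  induction m with
  | zero => simp
  | succ m ih =>
    rw [sum_Icc_succ_top (by omega), add_mul, ih]
    ring

theorem prod_Icc_one_pow_sub_one_eq {K : Type*} [Field K] {a : K} (ha : a ≠ 0) (m : ℕ) :
    ∏ i ∈ Icc 1 m, (a ^ i - 1) = a ^ (∑ i ∈ Icc 1 m, i) * ∏ i ∈ Icc 1 m, (1 - a⁻¹ ^ i) := by
  rw [← prod_pow_eq_pow_sum, ← prod_mul_distrib]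
  refine prod_congr rfl fun i _ => ?_
  rw [mul_sub, mul_one, ← mul_pow, mul_inv_cancel₀ ha, one_pow]

section PowSubOne

variable {K : Type*} [Field K] [LinearOrder K] [IsStrictOrderedRing K] {a : K}

theorem sum_Icc_one_inv_pow_le (ha : 1 < a) (m : ℕ) :
    ∑ i ∈ Icc 1 m, a⁻¹ ^ i ≤ 1 / (a - 1) := by
  have ha0 : 0 < a := zero_lt_one.trans ha
  calc ∑ i ∈ Icc 1 m, a⁻¹ ^ i = ∑ i ∈ Ico 1 (m + 1), a⁻¹ ^ i := rfl
    _ ≤ a⁻¹ ^ 1 / (1 - a⁻¹) :=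
      geom_sum_Ico_le_of_lt_one (inv_nonneg.2 ha0.le) (inv_lt_one_of_one_lt₀ ha)
    _ = 1 / (a - 1) := by
      have : a - 1 ≠ 0 := sub_ne_zero.2 ha.ne'
      field_simp

theorem one_sub_inv_sub_one_mul_pow_le_prod (ha : 1 < a) (m : ℕ) :
    (1 - 1 / (a - 1)) * a ^ (∑ i ∈ Icc 1 m, i) ≤ ∏ i ∈ Icc 1 m, (a ^ i - 1) := by
  have ha0 : 0 < a := zero_lt_one.trans ha
  have hweier : 1 - ∑ i ∈ Icc 1 m, a⁻¹ ^ i ≤ ∏ i ∈ Icc 1 m, (1 - a⁻¹ ^ i) :=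
    one_sub_sum_le_prod_one_sub _ (fun i _ => by positivity)
      (fun i _ => pow_le_one₀ (inv_nonneg.2 ha0.le) (inv_le_one_of_one_le₀ ha.le))
  rw [prod_Icc_one_pow_sub_one_eq ha0.ne', mul_comm]
  gcongr
  linarith [sum_Icc_one_inv_pow_le ha m]

theorem two_thirds_mul_pow_le_prod_pow_two_mul_sub_one {r : K} (hr : 2 ≤ r) (m : ℕ) :
    2 / 3 * r ^ (m * (m + 1)) ≤ ∏ i ∈ Icc 1 m, (r ^ (2 * i) - 1) := by
  have hr2 : 4 ≤ r ^ 2 := by nlinarith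
  have key := one_sub_inv_sub_one_mul_pow_le_prod (a := r ^ 2) (by linarith) m
  simp only [← pow_mul, mul_comm 2 (∑ i ∈ Icc 1 m, i), sum_Icc_one_id_mul_two] at key
  refine le_trans ?_ key
  gcongr
  have : 1 / (r ^ 2 - 1) ≤ 1 / 3 := one_div_le_one_div_of_le (by norm_num) (by linarith)
  linarith

end PowSubOne

/-- Lemma 3.17 (|SO_2n|): for `q ≥ 2` and `n ≥ 4`,
`2 * q^(n(n-1)) * (q^n - 1) * ∏_{i=1}^{n-1} (q^(2i) - 1) > q^(2n² - n)`, expressing that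
the order of `SO_{2n}^±(q)` exceeds `(1/2) q^(2n² - n)`. -/
theorem card_even_orthogonal_gt (q n : ℕ) (hq : 2 ≤ q) (hn : 4 ≤ n) :
    q ^ (2 * n ^ 2 - n) <
      2 * (q ^ (n * (n - 1)) * (q ^ n - 1) * ∏ i ∈ Finset.Icc 1 (n - 1), (q ^ (2 * i) - 1)) := by
  obtain ⟨m, rfl⟩ : ∃ m, n = m + 1 := ⟨n - 1, by omega⟩
  have hr : (2 : ℝ) ≤ q := by exact_mod_cast hq
  have hcast : ∀ k, ((q ^ k - 1 : ℕ) : ℝ) = (q : ℝ) ^ k - 1 := fun k => by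
    rw [Nat.cast_sub (Nat.one_le_pow _ _ (by omega)), Nat.cast_pow, Nat.cast_one]
  have hexp : 2 * (m + 1) ^ 2 - (m + 1) = m * (m + 1) + (m + 1) + m * (m + 1) :=
    Nat.sub_eq_of_eq_add (by ring)
  have hpow : (16 : ℝ) ≤ (q : ℝ) ^ (m + 1) :=
    calc (16 : ℝ) = 2 ^ 4 := by norm_num
      _ ≤ 2 ^ (m + 1) := pow_le_pow_right₀ (by norm_num) (by omega)
      _ ≤ (q : ℝ) ^ (m + 1) := pow_le_pow_left₀ (by norm_num) hr _
  have hprod := two_thirds_mul_pow_le_prod_pow_two_mul_sub_one hr m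
  rw [hexp, ← Nat.cast_lt (α := ℝ)]
  push_cast [hcast]
  rw [pow_add, pow_add, mul_comm (m + 1) m]
  set P := (q : ℝ) ^ (m * (m + 1))
  set Q := (q : ℝ) ^ (m + 1)
  have hP : 0 < P := by positivity
  have hQW : Q * P < 2 * ((Q - 1) * ∏ i ∈ Icc 1 m, ((q : ℝ) ^ (2 * i) - 1)) := by
    linarith [mul_le_mul_of_nonneg_left hprod (by linarith : 0 ≤ Q - 1),
      mul_pos (by linarith : 0 < Q - 4) hP]
  linarith [mul_lt_mul_of_pos_left hQW hP]
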